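/- arXiv:1105.2695 — 4 statements merged into one kernel-verified Lean document; each statement's English description precedes it below -/
import Mathlib

section
/- Let A be a maximal monotone operator on a Hilbert space H and let Y: [0,∞) → H be the unique solution of dY/dt ∈ −A(Y(t)), Y(0) = Y₀ ∈ D(A). Then for a.e. t > 0, the right derivative d⁺Y/dt(t) equals −A°(Y(t)), where A°(Y) is the element of minimal norm in A(Y); i.e., ‖dY/dt(t)‖ = min{‖Z‖ : Z ∈ A(Y(t))}. -/
/-!
For `Z ∈ A (Y t)` and a later time `s` at which the inclusion holds, monotonicity gives
`0 ≤ ⟪-Y' s - Z, Y s - Y t⟫`. If `s ↓ t` can be chosen with `Y' s → Y' t`, dividing by `s - t`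
yields `⟪Y' t + Z, Y' t⟫ ≤ 0`, hence `‖Y' t‖ ≤ ‖Z‖`. Such times exist for almost every `t`:
the range of `deriv Y` is separable, so it is covered by countably many small balls, and at a
Lebesgue density point of the set of good times at which `Y'` lies in one of these balls, that set
has points immediately to the right.
-/

open Filter MeasureTheory Metric Set TopologicalSpace Topology Pointwise
open scoped RealInnerProductSpace

theorem frequently_nhdsGT_mem_of_density_one {S : Set ℝ} {x : ℝ}
    (h : Tendsto (fun r => volume (S ∩ closedBall x r) / volume (closedBall x r)) (𝓝[>] 0)
      (𝓝 1)) :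
    ∃ᶠ s in 𝓝[>] x, s ∈ S := by
  have hmeets : ∀ᶠ r in 𝓝[>] (0 : ℝ), (S ∩ ({x} + r • Ioo (0 : ℝ) 1)).Nonempty :=
    Measure.eventually_nonempty_inter_smul_of_density_one volume S x h (Ioo 0 1) measurableSet_Ioo
      (by simp)
  rw [(nhdsGT_basis x).frequently_iff]
  intro b hxb
  obtain ⟨r, ⟨s, hsS, hs⟩, hr⟩ :=
    (hmeets.and (Ioo_mem_nhdsGT (sub_pos.2 hxb))).exists
  rw [singleton_add, LinearOrderedField.smul_Ioo hr.1, mul_zero, mul_one] at hs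
  obtain ⟨a, ⟨ha0, ha1⟩, rfl⟩ := hs
  exact ⟨x + a, ⟨by linarith, by linarith [hr.2]⟩, hsS⟩

theorem ae_frequently_nhdsGT_dist_lt {E : Type*} [PseudoMetricSpace E] {g : ℝ → E}
    {P : ℝ → Prop} (hg : IsSeparable (g '' {t | P t})) :
    ∀ᵐ t, P t → ∀ ε > 0, ∃ᶠ s in 𝓝[>] t, P s ∧ dist (g s) (g t) < ε := by
  obtain ⟨D, hD, hgD⟩ := hg
  set S : E → ℕ → Set ℝ := fun c n => {s | P s ∧ dist (g s) c < 1 / (n + 1)}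
  have hdensity : ∀ᵐ t, ∀ c ∈ D, ∀ n : ℕ, t ∈ S c n → ∃ᶠ s in 𝓝[>] t, s ∈ S c n := by
    refine (ae_ball_iff hD).2 fun c _ => ae_all_iff.2 fun n => ?_
    exact ae_imp_of_ae_restrict <| (Besicovitch.ae_tendsto_measure_inter_div volume (S c n)).mono
      fun t ht => frequently_nhdsGT_mem_of_density_one ht
  filter_upwards [hdensity] with t ht hPt ε hε
  obtain ⟨n, hn⟩ := exists_nat_one_div_lt (half_pos hε)
  obtain ⟨c, hcD, hc⟩ :=
    mem_closure_iff.1 (hgD ⟨t, hPt, rfl⟩) _ (Nat.one_div_pos_of_nat (n := n))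
  refine (ht c hcD n ⟨hPt, hc⟩).mono fun s ⟨hPs, hs⟩ => ⟨hPs, ?_⟩
  calc dist (g s) (g t) ≤ dist (g s) c + dist c (g t) := dist_triangle _ _ _
    _ < ε := by rw [dist_comm c]; linarith

section MonotoneOperator

variable {H : Type*} [NormedAddCommGroup H] [InnerProductSpace ℝ H] {A : H → Set H}

theorem norm_le_of_inner_add_self_nonpos {u Z : H} (h : ⟪u + Z, u⟫ ≤ 0) : ‖u‖ ≤ ‖Z‖ := by
  have hsq : ‖u‖ ^ 2 ≤ ‖Z‖ * ‖u‖ := by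
    rw [inner_add_left, real_inner_self_eq_norm_sq] at h
    linarith [neg_le_of_abs_le (abs_real_inner_le_norm Z u)]
  nlinarith [norm_nonneg u, norm_nonneg Z]

theorem inner_add_self_le_of_monotone
    (hmono : ∀ Y₁ Y₂ Z₁ Z₂ : H, Z₁ ∈ A Y₁ → Z₂ ∈ A Y₂ → 0 ≤ ⟪Z₁ - Z₂, Y₁ - Y₂⟫)
    {x y u v Z : H} {h ε : ℝ} (hZ : Z ∈ A x) (hv : -v ∈ A y) (hh : 0 < h)
    (hy : ‖y - x - h • u‖ ≤ ε * h) (hvu : ‖v - u‖ ≤ ε) :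
    ⟪u + Z, u⟫ ≤ ε * (2 * ‖u‖ + ‖Z‖ + ε) := by
  have hε : 0 ≤ ε := (norm_nonneg _).trans hvu
  have hexpand : ⟪-v - Z, y - x⟫ =
      -h * ⟪u + Z, u⟫ - h * ⟪v - u, u⟫ + ⟪-v - Z, y - x - h • u⟫ := by
    simp only [inner_sub_right, inner_sub_left, inner_add_left, inner_neg_left,
      real_inner_smul_right]
    ring
  have hdrift : -(ε * ‖u‖) ≤ ⟪v - u, u⟫ :=
    le_trans (by gcongr) (neg_le_of_abs_le (abs_real_inner_le_norm (v - u) u))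
  have hvZ : ‖-v - Z‖ ≤ ‖u‖ + ε + ‖Z‖ :=
    calc ‖-v - Z‖ ≤ ‖v‖ + ‖Z‖ := by rw [← norm_neg v]; exact norm_sub_le _ _
      _ ≤ ‖u‖ + ε + ‖Z‖ := by linarith [norm_le_norm_add_norm_sub' v u, norm_sub_rev v u]
  have herror : ⟪-v - Z, y - x - h • u⟫ ≤ (‖u‖ + ε + ‖Z‖) * (ε * h) :=
    (real_inner_le_norm _ _).trans (mul_le_mul hvZ hy (norm_nonneg _) (by positivity))
  have hmon := hmono _ _ _ _ hv hZ
  refine le_of_mul_le_mul_left ?_ hh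
  nlinarith

theorem norm_le_of_frequently_nhdsGT
    (hmono : ∀ Y₁ Y₂ Z₁ Z₂ : H, Z₁ ∈ A Y₁ → Z₂ ∈ A Y₂ → 0 ≤ ⟪Z₁ - Z₂, Y₁ - Y₂⟫)
    {Y Y' : ℝ → H} {t : ℝ} {Z : H} (hY : HasDerivAt Y (Y' t) t) (hZ : Z ∈ A (Y t))
    (hfreq : ∀ ε > 0, ∃ᶠ s in 𝓝[>] t, -Y' s ∈ A (Y s) ∧ dist (Y' s) (Y' t) < ε) :
    ‖Y' t‖ ≤ ‖Z‖ := by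
  set u := Y' t
  have hbound : ∀ ε > 0, ⟪u + Z, u⟫ ≤ ε * (2 * ‖u‖ + ‖Z‖ + ε) := by
    intro ε hε
    have hlittleO : ∀ᶠ s in 𝓝[>] t, ‖Y s - Y t - (s - t) • u‖ ≤ ε * ‖s - t‖ :=
      nhdsWithin_le_nhds ((hasDerivAt_iff_isLittleO.mp hY).def hε)
    obtain ⟨s, ⟨hAs, hdist⟩, hts, hs⟩ :=
      ((hfreq ε hε).and_eventually (eventually_mem_nhdsWithin.and hlittleO)).exists
    rw [Real.norm_of_nonneg (sub_nonneg.2 (le_of_lt hts))] at hs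
    exact inner_add_self_le_of_monotone hmono hZ hAs (sub_pos.2 hts) hs
      (by rw [← dist_eq_norm]; exact hdist.le)
  have hlim : Tendsto (fun ε : ℝ => ε * (2 * ‖u‖ + ‖Z‖ + ε)) (𝓝[>] 0) (𝓝 0) := by
    refine tendsto_nhdsWithin_of_tendsto_nhds ?_
    have hcont : Continuous fun ε : ℝ => ε * (2 * ‖u‖ + ‖Z‖ + ε) := by fun_prop
    simpa using hcont.tendsto 0
  exact norm_le_of_inner_add_self_nonpos <|
    ge_of_tendsto hlim (eventually_nhdsWithin_of_forall hbound)

end MonotoneOperator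

theorem slow_solution_property_general
    {H : Type*} [NormedAddCommGroup H] [InnerProductSpace ℝ H]
    (A : H → Set H)
    (hmono : ∀ Y₁ Y₂ Z₁ Z₂ : H, Z₁ ∈ A Y₁ → Z₂ ∈ A Y₂ → 0 ≤ ⟪Z₁ - Z₂, Y₁ - Y₂⟫)
    (Y Y' : ℝ → H)
    (hderiv : ∀ᵐ t ∂(MeasureTheory.volume.restrict (Set.Ioi (0 : ℝ))),
      HasDerivAt Y (Y' t) t ∧ -Y' t ∈ A (Y t)) :
    ∀ᵐ t ∂(MeasureTheory.volume.restrict (Set.Ioi (0 : ℝ))),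
      IsLeast {r : ℝ | ∃ Z ∈ A (Y t), r = ‖Z‖} ‖Y' t‖ := by
  set good : ℝ → Prop := fun s => HasDerivAt Y (Y' s) s ∧ -Y' s ∈ A (Y s)
  have hsep : IsSeparable (Y' '' {s | good s}) :=
    (isSeparable_range_deriv Y).mono (by rintro _ ⟨s, hs, rfl⟩; exact ⟨s, hs.1.deriv⟩)
  filter_upwards [hderiv, ae_restrict_of_ae (ae_frequently_nhdsGT_dist_lt hsep)]
    with t ht hfreq
  refine ⟨⟨-Y' t, ht.2, (norm_neg _).symm⟩, ?_⟩
  rintro _ ⟨Z, hZ, rfl⟩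
  exact norm_le_of_frequently_nhdsGT hmono ht.1 hZ fun ε hε =>
    (hfreq ht ε hε).mono fun s hs => ⟨hs.1.2, hs.2⟩

/-- Let `A` be a maximal monotone operator on a real Hilbert space `H`
(monotone with `I + λA` surjective for `λ > 0`, by Minty's theorem) and let `Y` be the
solution of the differential inclusion `dY/dt ∈ -A(Y(t))` with `Y(0) = Y₀ ∈ D(A)`.
Then for a.e. `t > 0` the derivative has minimal norm: `‖dY/dt(t)‖ = min {‖Z‖ : Z ∈ A(Y(t))}`,
i.e. `dY/dt(t) = -A°(Y(t))` where `A°(Y)` is the minimal section of `A(Y)` (slow solutions). -/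
theorem slow_solution_property
    {H : Type*} [NormedAddCommGroup H] [InnerProductSpace ℝ H] [CompleteSpace H]
    (A : H → Set H)
    (hmono : ∀ Y₁ Y₂ Z₁ Z₂ : H, Z₁ ∈ A Y₁ → Z₂ ∈ A Y₂ → 0 ≤ ⟪Z₁ - Z₂, Y₁ - Y₂⟫)
    (hmax : ∀ lam : ℝ, 0 < lam → ∀ W : H, ∃ Y Z : H, Z ∈ A Y ∧ Y + lam • Z = W)
    (Y₀ : H) (hY₀ : (A Y₀).Nonempty)
    (Y Y' : ℝ → H) (hY0 : Y 0 = Y₀)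
    (hcont : Continuous Y)
    (hderiv : ∀ᵐ t ∂(MeasureTheory.volume.restrict (Set.Ioi (0 : ℝ))),
      HasDerivAt Y (Y' t) t ∧ -Y' t ∈ A (Y t)) :
    ∀ᵐ t ∂(MeasureTheory.volume.restrict (Set.Ioi (0 : ℝ))),
      IsLeast {r : ℝ | ∃ Z ∈ A (Y t), r = ‖Z‖} ‖Y' t‖ :=
  slow_solution_property_general A hmono Y Y' hderiv
end

section
/- Let g : [u⁻,u⁺] → ℝ be continuous and non-decreasing. Then the minimum of ∫_{u⁻}^{u⁺} |V(v) + g(v)|² dv over all non-decreasing functions V on [u⁻,u⁺] is attained at the constant function V(v) = −c, where c = (1/(u⁺−u⁻)) ∫_{u⁻}^{u⁺} g(v) dv is the mean of g. -/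
/-!
Put `W = V + c` and `h = g - c`, so that `V + g = W + h` and `h` has mean zero.
Then `∫ (V + g)² = ∫ h² + ∫ W² + 2 ∫ W h`, and it suffices that `∫ W h ≥ 0`
(Chebyshev's inequality). Since `h` is monotone, it is `≤ 0` before some point `t`
and `≥ 0` after it, so `(W - W t) h ≥ 0` pointwise, and
`∫ W h = ∫ (W - W t) h + W t ∫ h = ∫ (W - W t) h ≥ 0`.
-/

open MeasureTheory Set

theorem MonotoneOn.exists_forall_nonpos_of_lt_and_nonneg_of_gt {α : Type*}
    [ConditionallyCompleteLinearOrder α] {h : α → ℝ} {a b : α}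
    (hh : MonotoneOn h (Icc a b)) (hab : a ≤ b) :
    ∃ t ∈ Icc a b, ∀ x ∈ Icc a b, (x < t → h x ≤ 0) ∧ (t < x → 0 ≤ h x) := by
  -- `a` is added so that the supremum lies in `Icc a b` even when `h > 0` everywhere.
  set S := insert a {x ∈ Icc a b | h x ≤ 0}
  have hSb : ∀ x ∈ S, x ≤ b := by rintro x (rfl | ⟨hx, -⟩) <;> [exact hab; exact hx.2]
  have hS : BddAbove S := ⟨b, hSb⟩
  have ht : sSup S ∈ Icc a b :=
    ⟨le_csSup hS (mem_insert a _), csSup_le (insert_nonempty _ _) hSb⟩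
  refine ⟨sSup S, ht, fun x hx => ⟨fun hxt => ?_, fun htx => ?_⟩⟩
  · obtain ⟨s, hs, hxs⟩ := exists_lt_of_lt_csSup (insert_nonempty _ _) hxt
    rcases hs with rfl | ⟨hs, hhs⟩
    · exact absurd hx.1 hxs.not_ge
    · exact (hh hx hs hxs.le).trans hhs
  · by_contra hneg
    exact notMem_of_csSup_lt htx hS (Or.inr ⟨hx, (not_le.1 hneg).le⟩)

theorem MonotoneOn.intervalIntegrable_mul {μ : Measure ℝ} [IsLocallyFiniteMeasure μ]
    {f k : ℝ → ℝ} {a b : ℝ} (hf : MonotoneOn f (uIcc a b)) (hk : MonotoneOn k (uIcc a b)) :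
    IntervalIntegrable (fun x => f x * k x) μ a b := by
  rw [intervalIntegrable_iff]
  have hfk : IntegrableOn (fun x => f x * k x) (uIcc a b) μ :=
    (hk.integrableOn_isCompact isCompact_uIcc).mul_of_top_right (hf.memLp_isCompact isCompact_uIcc)
  exact hfk.mono_set Ioc_subset_Icc_self

theorem intervalIntegral.integral_mul_nonneg_of_monotoneOn {μ : Measure ℝ}
    [IsLocallyFiniteMeasure μ] {W h : ℝ → ℝ} {a b : ℝ} (hab : a ≤ b)
    (hW : MonotoneOn W (Icc a b)) (hh : MonotoneOn h (Icc a b))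
    (h0 : ∫ x in a..b, h x ∂μ = 0) :
    0 ≤ ∫ x in a..b, W x * h x ∂μ := by
  obtain ⟨t, ht, hsign⟩ := hh.exists_forall_nonpos_of_lt_and_nonneg_of_gt hab
  have hpos : ∀ x ∈ Icc a b, 0 ≤ (W x - W t) * h x := by
    intro x hx
    rcases lt_trichotomy x t with hxt | rfl | htx
    · exact mul_nonneg_of_nonpos_of_nonpos (sub_nonpos.2 (hW hx ht hxt.le)) ((hsign x hx).1 hxt)
    · simp
    · exact mul_nonneg (sub_nonneg.2 (hW ht hx htx.le)) ((hsign x hx).2 htx)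
  rw [← uIcc_of_le hab] at hW hh
  calc 0 ≤ ∫ x in a..b, (W x - W t) * h x ∂μ := integral_nonneg hab hpos
    _ = ∫ x in a..b, W x * h x ∂μ - W t * ∫ x in a..b, h x ∂μ := by
      simp_rw [sub_mul]
      rw [integral_sub (hW.intervalIntegrable_mul hh) (hh.intervalIntegrable.const_mul _),
        integral_const_mul]
    _ = ∫ x in a..b, W x * h x ∂μ := by rw [h0, mul_zero, sub_zero]

theorem intervalIntegral.integral_sq_le_integral_add_sq_of_monotoneOn {μ : Measure ℝ}
    [IsLocallyFiniteMeasure μ] {W h : ℝ → ℝ} {a b : ℝ} (hab : a ≤ b)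
    (hW : MonotoneOn W (Icc a b)) (hh : MonotoneOn h (Icc a b))
    (h0 : ∫ x in a..b, h x ∂μ = 0) :
    ∫ x in a..b, h x ^ 2 ∂μ ≤ ∫ x in a..b, (W x + h x) ^ 2 ∂μ := by
  have hcross := integral_mul_nonneg_of_monotoneOn hab hW hh h0
  have hWsq : 0 ≤ ∫ x in a..b, W x * W x ∂μ :=
    integral_nonneg hab fun x _ => mul_self_nonneg (W x)
  rw [← uIcc_of_le hab] at hW hh
  have hexpand : ∀ x, (W x + h x) ^ 2 = (W x * W x + 2 * (W x * h x)) + h x ^ 2 :=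
    fun x => by ring
  simp_rw [hexpand, sq]
  rw [integral_add ((hW.intervalIntegrable_mul hW).add
      ((hW.intervalIntegrable_mul hh).const_mul 2)) (hh.intervalIntegrable_mul hh),
    integral_add (hW.intervalIntegrable_mul hW) ((hW.intervalIntegrable_mul hh).const_mul 2),
    integral_const_mul]
  linarith

theorem best_monotone_approx_is_neg_mean_general
    (um up : ℝ) (hu : um < up) (g : ℝ → ℝ)
    (hgm : MonotoneOn g (Set.Icc um up))
    (c : ℝ) (hc : c = (1 / (up - um)) * ∫ v in um..up, g v) :
    ∀ V : ℝ → ℝ, MonotoneOn V (Set.Icc um up) →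
      (∫ v in um..up, (-c + g v) ^ 2) ≤ ∫ v in um..up, (V v + g v) ^ 2 := by
  intro V hV
  have hmean : ∫ v in um..up, (-c + g v) = 0 := by
    have hg : IntervalIntegrable g volume um up := by
      rw [← uIcc_of_le hu.le] at hgm
      exact hgm.intervalIntegrable
    rw [intervalIntegral.integral_add intervalIntegrable_const hg, intervalIntegral.integral_const,
      smul_eq_mul, hc]
    field_simp [sub_ne_zero.2 hu.ne']
    ring
  have key := intervalIntegral.integral_sq_le_integral_add_sq_of_monotoneOn hu.le
    (hV.add_const c) (hgm.const_add (-c)) hmean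
  have hsum : ∀ v, V v + c + (-c + g v) = V v + g v := fun v => by ring
  simpa only [hsum] using key

/-- Let `g : [u⁻, u⁺] → ℝ` be continuous and non-decreasing. Then the minimum of
`∫_{u⁻}^{u⁺} |V(v) + g(v)|² dv` over all non-decreasing functions `V` on `[u⁻, u⁺]` is attained
at the constant function `V ≡ -c`, where `c = (1/(u⁺ - u⁻)) ∫_{u⁻}^{u⁺} g(v) dv` is the mean
of `g`. -/
theorem best_monotone_approx_is_neg_mean
    (um up : ℝ) (hu : um < up) (g : ℝ → ℝ)
    (hgc : ContinuousOn g (Set.Icc um up)) (hgm : MonotoneOn g (Set.Icc um up))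
    (c : ℝ) (hc : c = (1 / (up - um)) * ∫ v in um..up, g v) :
    ∀ V : ℝ → ℝ, MonotoneOn V (Set.Icc um up) →
      (∫ v in um..up, (-c + g v) ^ 2) ≤ ∫ v in um..up, (V v + g v) ^ 2 :=
  best_monotone_approx_is_neg_mean_general um up hu g hgm c hc
end

section
/- If Y(t) ∈ K for all t ≥ 0 solves the variational inequality ⟨Ỹ − Y(t), ∂_t Y(t) + f'(v)·∇_x Y(t)⟩ ≥ 0 for all Ỹ ∈ K (in the distributional sense in t), then t ↦ ‖Y(t)‖² is constant in t; i.e., ∬ Y²(t,x,v) dx dv = ∬ Y²(0,x,v) dx dv for a.e. t > 0. -/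
/-!
Testing the variational inequality at time `s` with the admissible functions `Ỹ = 0` and
`Ỹ = 2 Y(s)` gives `∫ Y (∂ₜY + f'(v)·∇ₓY) = 0`. The transport term vanishes on its own:
`Y ⟪f'(v), ∇ₓY⟫` is the derivative of `Y² / 2` in the direction `f'(v)`, and by the divergence
theorem on the period box the contributions of opposite faces cancel. Hence
`d/dt ∫ Y² = 2 ∫ Y ∂ₜY = 0` for `t ≥ 0`.
-/

open MeasureTheory Set Function
open scoped RealInnerProductSpace

theorem integral_Icc_fderiv_apply_eq_zero_of_periodic {n : ℕ} {a b : Fin n → ℝ}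
    {w : (Fin n → ℝ) → ℝ} {w' : (Fin n → ℝ) → (Fin n → ℝ) →L[ℝ] ℝ}
    (hw : ∀ x, HasFDerivAt w (w' x) x)
    (hper : ∀ i x, w (x + Pi.single i (b i - a i)) = w x) (c : Fin n → ℝ)
    (hint : IntegrableOn (fun x => w' x c) (Icc a b)) :
    ∫ x in Icc a b, w' x c = 0 := by
  rcases n with _ | m
  · simp only [Subsingleton.elim c 0, map_zero, integral_zero]
  by_cases hab : a ≤ b
  swap
  · simp [Icc_eq_empty hab]
  have hdiv : ∀ x, ∑ i, (c i • w' x) (Pi.single i 1) = w' x c := fun x => by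
    simp_rw [smul_apply, ← map_smul, ← Pi.single_smul', smul_eq_mul, mul_one, ← map_sum,
      Finset.univ_sum_single]
  have hfaces := integral_divergence_of_hasFDerivAt_off_countable' a b hab
    (fun i x => c i * w x) (fun i x => c i • w' x) ∅ countable_empty
    (fun i => (continuous_const.mul (continuous_iff_continuousAt.2
      fun x => (hw x).continuousAt)).continuousOn)
    (fun x _ i => (hw x).const_mul (c i)) (by simpa only [hdiv] using hint)
  simp only [hdiv] at hfaces
  -- periodicity makes the integrals over opposite faces agree
  rw [hfaces]
  refine Finset.sum_eq_zero fun i _ => sub_eq_zero.2 (integral_congr_ae (.of_forall fun y => ?_))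
  have hface : Fin.insertNth i (b i) y =
      Fin.insertNth i (a i) y + (Pi.single i (b i - a i) : Fin (m + 1) → ℝ) := by
    rw [← Fin.insertNth_sub_same, add_sub_cancel]
  simp only [hface, hper]

def euclideanBox {ι : Type*} (a b : ι → ℝ) : Set (EuclideanSpace ℝ ι) :=
  {x | ∀ i, x i ∈ Icc (a i) (b i)}

section
variable {ι : Type*} (a b : ι → ℝ)

theorem euclideanBox_eq_ofLp_preimage : euclideanBox a b = WithLp.ofLp ⁻¹' Icc a b := by
  ext x
  simp [euclideanBox, Pi.le_def, forall_and]

theorem toLp_preimage_euclideanBox : WithLp.toLp 2 ⁻¹' euclideanBox a b = Icc a b := by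
  rw [euclideanBox_eq_ofLp_preimage]
  rfl

theorem isCompact_euclideanBox : IsCompact (euclideanBox a b) := by
  rw [euclideanBox_eq_ofLp_preimage]
  exact (PiLp.homeomorph 2 _).isCompact_preimage.2 isCompact_Icc

theorem setIntegral_euclideanBox [Fintype ι] {E : Type*} [NormedAddCommGroup E] [NormedSpace ℝ E]
    (φ : EuclideanSpace ℝ ι → E) :
    ∫ x in euclideanBox a b, φ x = ∫ y in Icc a b, φ (WithLp.toLp 2 y) := by
  rw [← toLp_preimage_euclideanBox, (PiLp.volume_preserving_toLp ι).setIntegral_preimage_emb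
    (MeasurableEquiv.toLp 2 (ι → ℝ)).measurableEmbedding]

theorem integrableOn_euclideanBox_iff [Fintype ι] {E : Type*} [NormedAddCommGroup E]
    (φ : EuclideanSpace ℝ ι → E) :
    IntegrableOn φ (euclideanBox a b) ↔ IntegrableOn (fun y => φ (WithLp.toLp 2 y)) (Icc a b) := by
  rw [← toLp_preimage_euclideanBox, ← (PiLp.volume_preserving_toLp ι).integrableOn_comp_preimage
    (MeasurableEquiv.toLp 2 (ι → ℝ)).measurableEmbedding]
  rfl
end

theorem setIntegral_euclideanBox_fderiv_apply_eq_zero_of_periodic {n : ℕ} {a b : Fin n → ℝ}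
    {w : EuclideanSpace ℝ (Fin n) → ℝ}
    {w' : EuclideanSpace ℝ (Fin n) → EuclideanSpace ℝ (Fin n) →L[ℝ] ℝ}
    (hw : ∀ x, HasFDerivAt w (w' x) x)
    (hper : ∀ i x, w (x + (b i - a i) • EuclideanSpace.single i 1) = w x)
    (c : EuclideanSpace ℝ (Fin n)) (hint : IntegrableOn (fun x => w' x c) (euclideanBox a b)) :
    ∫ x in euclideanBox a b, w' x c = 0 := by
  let e := (EuclideanSpace.equiv (Fin n) ℝ).symm
  rw [setIntegral_euclideanBox]
  rw [integrableOn_euclideanBox_iff] at hint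
  refine integral_Icc_fderiv_apply_eq_zero_of_periodic (w := w ∘ e)
    (w' := fun y => (w' (e y)).comp e)
    (fun y => (hw (e y)).comp y e.hasFDerivAt) (fun i y => ?_) (WithLp.ofLp c) ?_
  · have hshift : e (Pi.single i (b i - a i)) = (b i - a i) • EuclideanSpace.single i 1 := by
      ext j
      simp [e]
    simp only [Function.comp_apply, map_add, hshift, hper]
  · exact hint

theorem setIntegral_euclideanBox_mul_inner_gradient_eq_zero_of_periodic {n : ℕ} {a b : Fin n → ℝ}
    {u : EuclideanSpace ℝ (Fin n) → ℝ} {g : EuclideanSpace ℝ (Fin n) → EuclideanSpace ℝ (Fin n)}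
    (hu : ∀ x, HasGradientAt u (g x) x) (hg : Continuous g)
    (hper : ∀ i x, u (x + (b i - a i) • EuclideanSpace.single i 1) = u x)
    (c : EuclideanSpace ℝ (Fin n)) :
    ∫ x in euclideanBox a b, u x * ⟪c, g x⟫ = 0 := by
  have hu2 : ∀ x, HasFDerivAt (fun x => u x * u x)
      ((2 * u x) • InnerProductSpace.toDual ℝ _ (g x)) x := fun x =>
    ((hu x).hasFDerivAt.mul (hu x).hasFDerivAt).congr_fderiv (by rw [two_mul, add_smul])
  have hcont : Continuous u := continuous_iff_continuousAt.2 fun x => (hu x).continuousAt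
  have := setIntegral_euclideanBox_fderiv_apply_eq_zero_of_periodic hu2
    (fun i x => by simp only [hper]) c
    ((by fun_prop : Continuous _).continuousOn.integrableOn_compact (isCompact_euclideanBox a b))
  simpa [real_inner_comm, mul_assoc, integral_const_mul] using this

theorem setIntegral_prod_eq_zero_of_setIntegral_slice_eq_zero {α β E : Type*}
    [MeasurableSpace α] [MeasurableSpace β] [NormedAddCommGroup E] [NormedSpace ℝ E]
    {μ : Measure α} {ν : Measure β} [SFinite μ] [SFinite ν] {f : α × β → E} {s : Set α}
    {t : Set β} (hf : IntegrableOn f (s ×ˢ t) (μ.prod ν))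
    (h0 : ∀ y ∈ t, ∫ x in s, f (x, y) ∂μ = 0) :
    ∫ z in s ×ˢ t, f z ∂μ.prod ν = 0 := by
  rw [IntegrableOn, ← Measure.prod_restrict] at hf
  rw [← Measure.prod_restrict, integral_prod_symm f hf]
  exact setIntegral_eq_zero_of_forall_eq_zero h0

theorem setIntegral_euclideanBox_prod_mul_inner_gradient_eq_zero_of_periodic {n : ℕ}
    {a b : Fin n → ℝ} {t : Set ℝ} (ht : IsCompact t) {c : ℝ → EuclideanSpace ℝ (Fin n)}
    (hc : Continuous c) {u : EuclideanSpace ℝ (Fin n) → ℝ → ℝ}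
    {g : EuclideanSpace ℝ (Fin n) → ℝ → EuclideanSpace ℝ (Fin n)} (hu : Continuous (uncurry u))
    (hg : Continuous (uncurry g)) (hdu : ∀ x v, HasGradientAt (u · v) (g x v) x)
    (hper : ∀ i x v, u (x + (b i - a i) • EuclideanSpace.single i 1) v = u x v) :
    ∫ p in euclideanBox a b ×ˢ t, u p.1 p.2 * ⟪c p.2, g p.1 p.2⟫ = 0 := by
  have hint : IntegrableOn (fun p => u p.1 p.2 * ⟪c p.2, g p.1 p.2⟫) (euclideanBox a b ×ˢ t) :=
    (hu.mul ((hc.comp continuous_snd).inner hg)).continuousOn.integrableOn_compact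
      ((isCompact_euclideanBox a b).prod ht)
  rw [Measure.volume_eq_prod] at hint ⊢
  refine setIntegral_prod_eq_zero_of_setIntegral_slice_eq_zero hint fun v _ => ?_
  exact setIntegral_euclideanBox_mul_inner_gradient_eq_zero_of_periodic (hdu · v)
    (hg.comp (Continuous.prodMk_left v)) (hper · · v) (c v)

theorem hasDerivAt_setIntegral_of_continuous {X E : Type*} [TopologicalSpace X] [T2Space X]
    [MeasurableSpace X] [OpensMeasurableSpace X] [NormedAddCommGroup E] [NormedSpace ℝ E]
    {μ : Measure X} [IsFiniteMeasureOnCompacts μ] {S : Set X} (hS : IsCompact S)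
    {F F' : ℝ → X → E} (hF : Continuous (uncurry F)) (hF' : Continuous (uncurry F'))
    (hdF : ∀ s x, HasDerivAt (F · x) (F' s x) s) (s₀ : ℝ) :
    HasDerivAt (fun s => ∫ x in S, F s x ∂μ) (∫ x in S, F' s₀ x ∂μ) s₀ := by
  have hint : ∀ G : ℝ → X → E, Continuous (uncurry G) → ∀ s, IntegrableOn (G s) S μ :=
    fun G hG s => (hG.comp (Continuous.prodMk_right s)).continuousOn.integrableOn_compact hS
  obtain ⟨C, hC⟩ :=
    ((isCompact_closedBall s₀ 1).prod hS).exists_bound_of_continuousOn hF'.continuousOn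
  refine (hasDerivAt_integral_of_dominated_loc_of_deriv_le (bound := fun _ => C)
    (Metric.ball_mem_nhds s₀ one_pos) (.of_forall fun s => (hint F hF s).aestronglyMeasurable)
    (hint F hF s₀) (hint F' hF' s₀).aestronglyMeasurable ?_
    (integrableOn_const hS.measure_lt_top.ne) (.of_forall fun x s _ => hdF s x)).2
  refine (ae_restrict_mem hS.measurableSet).mono fun x hx s hs =>
    hC (s, x) ⟨Metric.ball_subset_closedBall hs, hx⟩

theorem variational_solution_conserves_L2_general
    (n : ℕ) (L : ℝ)
    (f' : ℝ → EuclideanSpace ℝ (Fin n)) (hf' : Continuous f')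
    (S : Set (EuclideanSpace ℝ (Fin n) × ℝ))
    (hS : S = ({x : EuclideanSpace ℝ (Fin n) | ∀ i, x i ∈ Set.Icc (-L) L} : Set _) ×ˢ
      Set.Icc (0 : ℝ) 1)
    (Y Yt : ℝ → EuclideanSpace ℝ (Fin n) → ℝ → ℝ)
    (Yx : ℝ → EuclideanSpace ℝ (Fin n) → ℝ → EuclideanSpace ℝ (Fin n))
    (hYc : Continuous fun q : ℝ × EuclideanSpace ℝ (Fin n) × ℝ => Y q.1 q.2.1 q.2.2)
    (hYtc : Continuous fun q : ℝ × EuclideanSpace ℝ (Fin n) × ℝ => Yt q.1 q.2.1 q.2.2)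
    (hYxc : Continuous fun q : ℝ × EuclideanSpace ℝ (Fin n) × ℝ => Yx q.1 q.2.1 q.2.2)
    (hdt : ∀ (t : ℝ) (x : EuclideanSpace ℝ (Fin n)) (v : ℝ),
      HasDerivAt (fun s => Y s x v) (Yt t x v) t)
    (hdx : ∀ (t : ℝ) (x : EuclideanSpace ℝ (Fin n)) (v : ℝ),
      HasGradientAt (fun x => Y t x v) (Yx t x v) x)
    (hper : ∀ (t : ℝ) (i : Fin n) (x : EuclideanSpace ℝ (Fin n)) (v : ℝ),
      Y t (x + (2 * L) • EuclideanSpace.single i 1) v = Y t x v)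
    (hmono : ∀ (t : ℝ) (x : EuclideanSpace ℝ (Fin n)),
      MonotoneOn (Y t x) (Set.Icc (0 : ℝ) 1))
    (hVI : ∀ t : ℝ, 0 ≤ t → ∀ Ytil : EuclideanSpace ℝ (Fin n) → ℝ → ℝ,
      (Continuous fun p : EuclideanSpace ℝ (Fin n) × ℝ => Ytil p.1 p.2) →
      (∀ x, MonotoneOn (Ytil x) (Set.Icc (0 : ℝ) 1)) →
      (∀ (i : Fin n) (x : EuclideanSpace ℝ (Fin n)) (v : ℝ),
        Ytil (x + (2 * L) • EuclideanSpace.single i 1) v = Ytil x v) →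
      0 ≤ ∫ p in S, (Ytil p.1 p.2 - Y t p.1 p.2) *
        (Yt t p.1 p.2 + ⟪f' p.2, Yx t p.1 p.2⟫)) :
    ∀ t : ℝ, 0 ≤ t →
      (∫ p in S, (Y t p.1 p.2) ^ 2) = ∫ p in S, (Y 0 p.1 p.2) ^ 2 := by
  have hSc : IsCompact S := hS ▸ (isCompact_euclideanBox _ _).prod isCompact_Icc
  have hint : ∀ φ : EuclideanSpace ℝ (Fin n) × ℝ → ℝ, Continuous φ → IntegrableOn φ S :=
    fun φ hφ => hφ.continuousOn.integrableOn_compact hSc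
  have hcY := fun s => hYc.comp (Continuous.prodMk_right s)
  have hcYt := fun s => hYtc.comp (Continuous.prodMk_right s)
  have hcYx := fun s => hYxc.comp (Continuous.prodMk_right s)
  have htest : ∀ s, 0 ≤ s →
      ∫ p in S, Y s p.1 p.2 * (Yt s p.1 p.2 + ⟪f' p.2, Yx s p.1 p.2⟫) = 0 := fun s hs => by
    have h0 := hVI s hs (fun _ _ => 0) continuous_const (fun _ => monotoneOn_const)
      fun _ _ _ => rfl
    have h2 := hVI s hs (fun x v => 2 * Y s x v) (continuous_const.mul (hcY s))
      (fun x _ ha _ hb hab => mul_le_mul_of_nonneg_left (hmono s x ha hb hab) zero_le_two)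
      fun i x v => by rw [hper]
    simp only [zero_sub, neg_mul, integral_neg, neg_nonneg, two_mul, add_sub_cancel_right] at h0 h2
    exact le_antisymm h0 h2
  have htransport : ∀ s, ∫ p in S, Y s p.1 p.2 * ⟪f' p.2, Yx s p.1 p.2⟫ = 0 := fun s => by
    rw [hS]
    exact setIntegral_euclideanBox_prod_mul_inner_gradient_eq_zero_of_periodic (a := fun _ => -L)
      (b := fun _ => L) isCompact_Icc hf' (hcY s) (hcYx s) (hdx s)
      fun i x v => by simpa only [sub_neg_eq_add, ← two_mul] using hper s i x v
  have hYYt : ∀ s, 0 ≤ s → ∫ p in S, Y s p.1 p.2 * Yt s p.1 p.2 = 0 := fun s hs => by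
    have hsplit : ∫ p in S, Y s p.1 p.2 * (Yt s p.1 p.2 + ⟪f' p.2, Yx s p.1 p.2⟫) =
        (∫ p in S, Y s p.1 p.2 * Yt s p.1 p.2) +
          ∫ p in S, Y s p.1 p.2 * ⟪f' p.2, Yx s p.1 p.2⟫ := by
      simp_rw [mul_add]
      exact integral_add (hint _ ((hcY s).mul (hcYt s)))
        (hint _ ((hcY s).mul ((hf'.comp continuous_snd).inner (hcYx s))))
    rwa [htest s hs, htransport, add_zero, eq_comm] at hsplit
  have hderiv : ∀ s, HasDerivAt (fun s => ∫ p in S, Y s p.1 p.2 ^ 2)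
      (∫ p in S, 2 * (Y s p.1 p.2 * Yt s p.1 p.2)) s :=
    hasDerivAt_setIntegral_of_continuous hSc (F := fun s p => Y s p.1 p.2 ^ 2) (hYc.pow 2)
      (continuous_const.mul (hYc.mul hYtc)) fun s p => by
        simpa [mul_comm, mul_assoc, mul_left_comm] using (hdt s p.1 p.2).fun_pow 2
  intro t ht
  refine constant_of_has_deriv_right_zero
    (fun s _ => (hderiv s).continuousAt.continuousWithinAt) (fun s hs => ?_) t ⟨ht, le_rfl⟩
  simpa only [integral_const_mul, hYYt s hs.1, mul_zero] using (hderiv s).hasDerivWithinAt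

/-- If `Y(t) ∈ K` (non-decreasing in `v`, `2L`-periodic in `x`) solves the
variational inequality `⟨Ỹ - Y(t), ∂ₜY(t) + f'(v)·∇ₓY(t)⟩ ≥ 0` for all `Ỹ ∈ K`, then the
`L²` norm is conserved: `∬ Y²(t,x,v) dx dv = ∬ Y²(0,x,v) dx dv` for all `t ≥ 0`
(take `Ỹ = 0` and `Ỹ = 2Y(t)` and use `⟨Y, f'·∇ₓY⟩ = 0` by periodicity). -/
theorem variational_solution_conserves_L2
    (n : ℕ) (L : ℝ) (hL : 0 < L)
    (f' : ℝ → EuclideanSpace ℝ (Fin n)) (hf' : Continuous f')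
    (S : Set (EuclideanSpace ℝ (Fin n) × ℝ))
    (hS : S = ({x : EuclideanSpace ℝ (Fin n) | ∀ i, x i ∈ Set.Icc (-L) L} : Set _) ×ˢ
      Set.Icc (0 : ℝ) 1)
    (Y Yt : ℝ → EuclideanSpace ℝ (Fin n) → ℝ → ℝ)
    (Yx : ℝ → EuclideanSpace ℝ (Fin n) → ℝ → EuclideanSpace ℝ (Fin n))
    (hYc : Continuous fun q : ℝ × EuclideanSpace ℝ (Fin n) × ℝ => Y q.1 q.2.1 q.2.2)
    (hYtc : Continuous fun q : ℝ × EuclideanSpace ℝ (Fin n) × ℝ => Yt q.1 q.2.1 q.2.2)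
    (hYxc : Continuous fun q : ℝ × EuclideanSpace ℝ (Fin n) × ℝ => Yx q.1 q.2.1 q.2.2)
    (hdt : ∀ (t : ℝ) (x : EuclideanSpace ℝ (Fin n)) (v : ℝ),
      HasDerivAt (fun s => Y s x v) (Yt t x v) t)
    (hdx : ∀ (t : ℝ) (x : EuclideanSpace ℝ (Fin n)) (v : ℝ),
      HasGradientAt (fun x => Y t x v) (Yx t x v) x)
    (hper : ∀ (t : ℝ) (i : Fin n) (x : EuclideanSpace ℝ (Fin n)) (v : ℝ),
      Y t (x + (2 * L) • EuclideanSpace.single i 1) v = Y t x v)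
    (hmono : ∀ (t : ℝ) (x : EuclideanSpace ℝ (Fin n)),
      MonotoneOn (Y t x) (Set.Icc (0 : ℝ) 1))
    (hVI : ∀ t : ℝ, 0 ≤ t → ∀ Ytil : EuclideanSpace ℝ (Fin n) → ℝ → ℝ,
      (Continuous fun p : EuclideanSpace ℝ (Fin n) × ℝ => Ytil p.1 p.2) →
      (∀ x, MonotoneOn (Ytil x) (Set.Icc (0 : ℝ) 1)) →
      (∀ (i : Fin n) (x : EuclideanSpace ℝ (Fin n)) (v : ℝ),
        Ytil (x + (2 * L) • EuclideanSpace.single i 1) v = Ytil x v) →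
      0 ≤ ∫ p in S, (Ytil p.1 p.2 - Y t p.1 p.2) *
        (Yt t p.1 p.2 + ⟪f' p.2, Yx t p.1 p.2⟫)) :
    ∀ t : ℝ, 0 ≤ t →
      (∫ p in S, (Y t p.1 p.2) ^ 2) = ∫ p in S, (Y 0 p.1 p.2) ^ 2 :=
  variational_solution_conserves_L2_general n L f' hf' S hS Y Yt Yx hYc hYtc hYxc hdt hdx hper hmono
    hVI
end

section
/- Travelling-wave solutions of the constrained transport inclusion: let n = 1, σ = (f(u⁺)−f(u⁻))/(u⁺−u⁻), and let Y₀(x,v) = 0 for v < u⁻, Y₀(x,v) = Φ(x) for u⁻ ≤ v ≤ u⁺, Y₀(x,v) = 1 for v > u⁺, where Φ is smooth non-decreasing from 0 to 1. Then Y(t,x,v) = Y₀(x − σt, v) satisfies ∂_t Y + f'(v) ∂_x Y ∈ −∂K(Y(t)); equivalently, for every Ỹ ∈ K, ⟨Ỹ − Y(t), ∂_t Y(t) + f'(v)∂_x Y(t)⟩ ≥ 0. -/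
open MeasureTheory intervalIntegral Set

lemma key_intervalIntegrable (J : ℝ → ℝ) (hm : Measurable J) (a b K : ℝ)
    (hK : ∀ v ∈ Set.uIcc a b, |J v| ≤ K) : IntervalIntegrable J volume a b := by
  refine (_root_.intervalIntegrable_const (c := K)).mono_fun hm.aestronglyMeasurable ?_
  filter_upwards [ae_restrict_mem measurableSet_uIoc] with v hv
  have hv' : v ∈ Set.uIcc a b := Set.Ioc_subset_Icc_self hv
  calc ‖J v‖ = |J v| := rfl
    _ ≤ K := hK v hv'
    _ ≤ ‖K‖ := le_abs_self K

lemma key_ineq (f f' : ℝ → ℝ) (hf : ∀ v : ℝ, HasDerivAt f (f' v) v) (hf'c : Continuous f')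
    (um up : ℝ) (hu : um < up) (hconv : ConvexOn ℝ (Set.Icc um up) f)
    (σ : ℝ) (hσ : σ = (f up - f um) / (up - um))
    (g : ℝ → ℝ) (hgmeas : Measurable g) (C : ℝ) (hgb : ∀ v, |g v| ≤ C)
    (hgmono : MonotoneOn g (Set.Icc um up)) (c : ℝ) :
    0 ≤ ∫ v in um..up, (g v - c) * (f' v - σ) := by
  obtain ⟨w, hw, hws⟩ := exists_hasDerivAt_eq_slope f f' hu
    (fun x _ => (hf x).continuousAt.continuousWithinAt) (fun x _ => hf x)
  have hwσ : f' w = σ := by rw [hws, hσ]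
  have hwIcc : w ∈ Set.Icc um up := Set.mem_Icc_of_Ioo hw
  have hmono : MonotoneOn f' (Set.Icc um up) := by
    have := hconv.monotoneOn_deriv (fun x _ => (hf x).differentiableAt)
    intro a ha b hb hab
    have := this ha hb hab
    rwa [(hf a).deriv, (hf b).deriv] at this
  have hint1 : IntervalIntegrable (fun v => (g v - g w) * (f' v - σ)) volume um up := by
    have hm : Measurable (fun v => (g v - g w) * (f' v - σ)) :=
      (hgmeas.sub measurable_const).mul ((hf'c.measurable).sub measurable_const)
    obtain ⟨M, hM⟩ := (isCompact_Icc (a := um) (b := up)).exists_bound_of_continuousOn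
      (hf'c.continuousOn (s := Set.Icc um up))
    refine key_intervalIntegrable _ hm um up ((C + |g w|) * (M + |σ|)) ?_
    intro v hv
    rw [Set.uIcc_of_le hu.le] at hv
    have hC0 : 0 ≤ C := le_trans (abs_nonneg _) (hgb 0)
    have e1 : |g v - g w| ≤ C + |g w| :=
      (abs_sub _ _).trans (by have := hgb v; linarith)
    have e2 : |f' v - σ| ≤ M + |σ| := by
      refine (abs_sub _ _).trans ?_
      have := hM v hv
      rw [Real.norm_eq_abs] at this
      linarith
    calc |(g v - g w) * (f' v - σ)| = |g v - g w| * |f' v - σ| := abs_mul _ _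
      _ ≤ (C + |g w|) * (M + |σ|) := mul_le_mul e1 e2 (abs_nonneg _) (by positivity)
  have hint2 : IntervalIntegrable (fun v => f' v - σ) volume um up :=
    (hf'c.intervalIntegrable um up).sub (_root_.intervalIntegrable_const)
  have hzero : (∫ v in um..up, (f' v - σ)) = 0 := by
    rw [intervalIntegral.integral_sub (hf'c.intervalIntegrable um up)
      _root_.intervalIntegrable_const]
    rw [intervalIntegral.integral_eq_sub_of_hasDerivAt (fun x _ => hf x)
      (hf'c.intervalIntegrable um up)]
    simp only [intervalIntegral.integral_const, smul_eq_mul, mul_one]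
    have hne : up - um ≠ 0 := sub_ne_zero.2 hu.ne'
    rw [hσ]
    field_simp
    ring
  have hdecomp : (∫ v in um..up, (g v - c) * (f' v - σ))
      = (∫ v in um..up, (g v - g w) * (f' v - σ)) + (g w - c) * ∫ v in um..up, (f' v - σ) := by
    rw [← intervalIntegral.integral_const_mul, ← intervalIntegral.integral_add hint1
      (hint2.const_mul _)]
    congr 1; ext v; ring
  rw [hdecomp, hzero, mul_zero, add_zero]
  apply intervalIntegral.integral_nonneg hu.le
  intro v hv
  rcases le_total v w with h | h
  · have h1 : g v - g w ≤ 0 := sub_nonpos.2 (hgmono hv hwIcc h)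
    have h2 : f' v - σ ≤ 0 := by
      have := hmono hv hwIcc h; rw [hwσ] at this; linarith
    nlinarith
  · have h1 : 0 ≤ g v - g w := sub_nonneg.2 (hgmono hwIcc hv h)
    have h2 : 0 ≤ f' v - σ := by
      have := hmono hwIcc hv h; rw [hwσ] at this; linarith
    exact mul_nonneg h1 h2


/-- Travelling-wave solutions of the constrained transport inclusion in one
space dimension. Let `σ = (f(u⁺) - f(u⁻))/(u⁺ - u⁻)` be the Rankine–Hugoniot speed of a
convex flux `f`, and let `Y₀(x,v) = 0` for `v < u⁻`, `= Φ(x)` for `u⁻ ≤ v ≤ u⁺`, `= 1` for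
`v > u⁺`, where `Φ` is smooth, non-decreasing, from `0` (at `-∞`) to `1` (at `+∞`). Then
`Y(t,x,v) = Y₀(x - σt, v)` satisfies `∂ₜY + f'(v)∂ₓY ∈ -∂K(Y(t))`; equivalently, for every
`Ỹ ∈ K` (bounded, measurable, non-decreasing in `v` on `[0,1]`),
`⟨Ỹ - Y(t), ∂ₜY(t) + f'(v)∂ₓY(t)⟩ ≥ 0`. -/
theorem travelling_wave_solves_inclusion
    (f f' : ℝ → ℝ) (hf : ∀ v : ℝ, HasDerivAt f (f' v) v) (hf'c : Continuous f')
    (um up : ℝ) (hum : 0 ≤ um) (hu : um < up) (hup : up ≤ 1)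
    (hconv : ConvexOn ℝ (Set.Icc um up) f)
    (σ : ℝ) (hσ : σ = (f up - f um) / (up - um))
    (Φ : ℝ → ℝ) (hΦsmooth : ContDiff ℝ (⊤ : ℕ∞) Φ) (hΦmono : Monotone Φ)
    (hΦ0 : Filter.Tendsto Φ Filter.atBot (nhds 0))
    (hΦ1 : Filter.Tendsto Φ Filter.atTop (nhds 1))
    (Y : ℝ → ℝ → ℝ → ℝ)
    (hY : Y = fun t x v => if v < um then 0 else if v ≤ up then Φ (x - σ * t) else 1) :
    ∀ t : ℝ, ∀ Ytil : ℝ → ℝ → ℝ,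
      Measurable (fun p : ℝ × ℝ => Ytil p.1 p.2) →
      (∃ C : ℝ, ∀ x v : ℝ, |Ytil x v| ≤ C) →
      (∀ x : ℝ, MonotoneOn (Ytil x) (Set.Icc (0 : ℝ) 1)) →
      0 ≤ ∫ x : ℝ, ∫ v in (0:ℝ)..1, (Ytil x v - Y t x v) *
        (deriv (fun s => Y s x v) t + f' v * deriv (fun ξ => Y t ξ v) x) := by
  intro t Ytil hmeas hbdd hmono
  obtain ⟨C, hC⟩ := hbdd
  subst hY
  set φ : ℝ → ℝ := deriv Φ with hφ
  have hΦdiff : Differentiable ℝ Φ := hΦsmooth.differentiable (by simp)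
  have hΦd : ∀ y : ℝ, HasDerivAt Φ (φ y) y := fun y => (hΦdiff y).hasDerivAt
  have hφ0 : ∀ y : ℝ, 0 ≤ φ y := by
    intro y
    have h := hasDerivAt_iff_tendsto_slope.mp (hΦd y)
    refine ge_of_tendsto h ?_
    filter_upwards [self_mem_nhdsWithin] with z hz
    rcases lt_or_gt_of_ne (hz : z ≠ y) with h' | h'
    · rw [slope_comm, slope_def_field]
      exact div_nonneg (sub_nonneg.2 (hΦmono h'.le)) (sub_nonneg.2 h'.le)
    · rw [slope_def_field]
      exact div_nonneg (sub_nonneg.2 (hΦmono h'.le)) (sub_nonneg.2 h'.le)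
  apply MeasureTheory.integral_nonneg
  intro x
  simp only
  set Φc : ℝ := Φ (x - σ * t) with hΦc
  set φc : ℝ := φ (x - σ * t) with hφc
  -- the derivative computations
  have hdt : HasDerivAt (fun s : ℝ => Φ (x - σ * s)) (-σ * φc) t := by
    have h1 : HasDerivAt (fun s : ℝ => x - σ * s) (-σ) t := by
      simpa using ((hasDerivAt_id t).const_mul σ).const_sub x
    have : HasDerivAt (fun s : ℝ => Φ (x - σ * s)) (φ (x - σ * t) * -σ) t := (hΦd (x - σ * t)).comp t h1
    convert this using 1
    ring
  have hdx : HasDerivAt (fun ξ : ℝ => Φ (ξ - σ * t)) φc x := by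
    have h1 : HasDerivAt (fun ξ : ℝ => ξ - σ * t) 1 x := (hasDerivAt_id x).sub_const _
    simpa using (show HasDerivAt (fun ξ : ℝ => Φ (ξ - σ * t)) (φ (x - σ * t) * 1) x from (hΦd (x - σ * t)).comp x h1)
  set J : ℝ → ℝ := fun v =>
    if v < um then 0 else if v ≤ up then (Ytil x v - Φc) * (f' v - σ) * φc else 0 with hJ
  have hIJ : ∀ v : ℝ,
      (Ytil x v - (if v < um then 0 else if v ≤ up then Φ (x - σ * t) else 1)) *
        (deriv (fun s => if v < um then 0 else if v ≤ up then Φ (x - σ * s) else 1) t +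
          f' v * deriv (fun ξ => if v < um then 0 else if v ≤ up then Φ (ξ - σ * t) else 1) x)
        = J v := by
    intro v
    by_cases hv1 : v < um
    · simp only [hJ, if_pos hv1, deriv_const]
      ring
    · by_cases hv2 : v ≤ up
      · simp only [hJ, if_neg hv1, if_pos hv2, hdt.deriv, hdx.deriv]
        ring
      · simp only [hJ, if_neg hv1, if_neg hv2, deriv_const]
        ring
  have := hIJ
  calc (0:ℝ) ≤ φc * ∫ v in um..up, (Ytil x v - Φc) * (f' v - σ) := by
        refine mul_nonneg (hφ0 _) ?_
        exact key_ineq f f' hf hf'c um up hu hconv σ hσ (Ytil x)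
          (hmeas.comp measurable_prodMk_left) C (hC x)
          ((hmono x).mono (Set.Icc_subset_Icc hum hup)) Φc
    _ = ∫ v in um..up, J v := by
        rw [← intervalIntegral.integral_const_mul]
        refine intervalIntegral.integral_congr ?_
        intro v hv
        rw [Set.uIcc_of_le hu.le] at hv
        simp only [hJ, if_neg (not_lt.2 hv.1), if_pos hv.2]
        ring
    _ = ∫ v in (0:ℝ)..1, J v := by
        -- J is bounded and measurable, hence interval integrable on all of [0,1]
        have hJm : Measurable J := by
          refine Measurable.ite measurableSet_Iio measurable_const ?_
          refine Measurable.ite measurableSet_Iic ?_ measurable_const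
          exact (((hmeas.comp measurable_prodMk_left).sub measurable_const).mul
            ((hf'c.measurable).sub measurable_const)).mul measurable_const
        obtain ⟨M, hM⟩ := (isCompact_Icc (a := (0:ℝ)) (b := 1)).exists_bound_of_continuousOn
          (hf'c.continuousOn (s := Set.Icc 0 1))
        have hC0 : 0 ≤ C := le_trans (abs_nonneg _) (hC x 0)
        have hbound : ∀ v ∈ Set.Icc (0:ℝ) 1, |J v| ≤ (C + |Φc|) * (M + |σ|) * |φc| := by
          intro v hv
          have hM0 : 0 ≤ M :=
            le_trans (norm_nonneg _) (hM 0 (Set.mem_Icc.2 ⟨le_refl 0, zero_le_one⟩))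
          have hKpos : 0 ≤ (C + |Φc|) * (M + |σ|) * |φc| := by positivity
          simp only [hJ]
          by_cases hv1 : v < um
          · simpa [if_pos hv1] using hKpos
          · by_cases hv2 : v ≤ up
            · simp only [if_neg hv1, if_pos hv2]
              have e1 : |Ytil x v - Φc| ≤ C + |Φc| :=
                (abs_sub _ _).trans (by have := hC x v; linarith)
              have e2 : |f' v - σ| ≤ M + |σ| := by
                refine (abs_sub _ _).trans ?_
                have := hM v hv
                rw [Real.norm_eq_abs] at this
                linarith
              calc |(Ytil x v - Φc) * (f' v - σ) * φc|
                  = |Ytil x v - Φc| * |f' v - σ| * |φc| := by rw [abs_mul, abs_mul]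
                _ ≤ (C + |Φc|) * (M + |σ|) * |φc| := by
                    refine mul_le_mul_of_nonneg_right ?_ (abs_nonneg _)
                    exact mul_le_mul e1 e2 (abs_nonneg _) (by positivity)
            · simpa [if_neg hv1, if_neg hv2] using hKpos
        have hJint : ∀ a b : ℝ, a ∈ Set.Icc (0:ℝ) 1 → b ∈ Set.Icc (0:ℝ) 1 →
            IntervalIntegrable J volume a b := by
          intro a b ha hb
          refine key_intervalIntegrable J hJm a b ((C + |Φc|) * (M + |σ|) * |φc|) ?_
          intro v hv
          refine hbound v ?_
          have : Set.uIcc a b ⊆ Set.Icc (0:ℝ) 1 := Set.uIcc_subset_Icc ha hb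
          exact this hv
        have h0 : (0:ℝ) ∈ Set.Icc (0:ℝ) 1 := by constructor <;> norm_num
        have h1' : (1:ℝ) ∈ Set.Icc (0:ℝ) 1 := by constructor <;> norm_num
        have hum' : um ∈ Set.Icc (0:ℝ) 1 := Set.mem_Icc.2 ⟨hum, by linarith⟩
        have hup' : up ∈ Set.Icc (0:ℝ) 1 := Set.mem_Icc.2 ⟨by linarith, hup⟩
        -- the pieces outside [um, up] vanish
        have hz1 : (∫ v in (0:ℝ)..um, J v) = 0 := by
          rw [intervalIntegral.integral_of_le hum]
          refine MeasureTheory.integral_eq_zero_of_ae ?_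
          have hne : ∀ᵐ v : ℝ, v ≠ um := by
            rw [MeasureTheory.ae_iff]
            have : {v : ℝ | ¬v ≠ um} = {um} := by ext v; simp
            rw [this]
            exact Real.volume_singleton
          filter_upwards [ae_restrict_mem measurableSet_Ioc, ae_restrict_of_ae hne]
            with v hv hvne
          have : v < um := lt_of_le_of_ne hv.2 hvne
          simp [hJ, this]
        have hz2 : (∫ v in up..1, J v) = 0 := by
          rw [intervalIntegral.integral_of_le hup]
          refine MeasureTheory.integral_eq_zero_of_ae ?_
          filter_upwards [ae_restrict_mem measurableSet_Ioc] with v hv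
          have h1 : ¬ v < um := not_lt.2 (le_trans hu.le hv.1.le)
          have h2 : ¬ v ≤ up := not_le.2 hv.1
          simp [hJ, h1, h2]
        have e1 : (∫ v in (0:ℝ)..up, J v) = (∫ v in (0:ℝ)..um, J v) + ∫ v in um..up, J v :=
          (intervalIntegral.integral_add_adjacent_intervals
            (hJint 0 um h0 hum') (hJint um up hum' hup')).symm
        have e2 : (∫ v in (0:ℝ)..1, J v) = (∫ v in (0:ℝ)..up, J v) + ∫ v in up..1, J v :=
          (intervalIntegral.integral_add_adjacent_intervals
            (hJint 0 up h0 hup') (hJint up 1 hup' h1')).symm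
        rw [e2, e1, hz1, hz2, zero_add, add_zero]
    _ = ∫ v in (0:ℝ)..1,
          (Ytil x v - (if v < um then 0 else if v ≤ up then Φ (x - σ * t) else 1)) *
            (deriv (fun s => if v < um then 0 else if v ≤ up then Φ (x - σ * s) else 1) t +
              f' v * deriv (fun ξ => if v < um then 0 else if v ≤ up then Φ (ξ - σ * t) else 1) x)
        := by
        refine intervalIntegral.integral_congr ?_
        intro v _
        exact (hIJ v).symm
end
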